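/- Let 0 ≤ θ_L < θ_R and let f : ℝ → ℝ be continuously differentiable on [θ_L, θ_R]. Then the double integral below converges absolutely and ∫_{θ_L}^{θ_R} ∫₀¹ u^{−1} [ f(u θ_L + (1−u)θ) + f(u θ_R + (1−u)θ) − 2 f(θ) ] du dθ = 0. In other words, the uniform distribution on [θ_L, θ_R] is stationary for the single-site hidden-parameter model of the harmonic process coupled to left and right reservoirs with parameters θ_L and θ_R. -/

import Mathlib

/-!
A `C¹` function is Lipschitz on `[θL, θR]`, so the integrand is bounded by `2 K (θR - θL)`;
this gives integrability and lets us integrate in `θ` first. Writing `D = θR - θL` and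
`Φ x = ∫_{θL}^x f`, the substitutions `x = u c + (1 - u) θ` turn the `θ`-integral into
`(u (1 - u))⁻¹ (Φ (θR - u D) - Φ (θL + u D) - (1 - 2u) Φ θR)`, which is odd under `u ↦ 1 - u`;
hence its integral over `(0, 1)` vanishes.
-/

open MeasureTheory Set

lemma convex_comb_mem_Icc {a b c θ u : ℝ} (hc : c ∈ Icc a b) (hθ : θ ∈ Icc a b)
    (hu : u ∈ Icc (0 : ℝ) 1) : u * c + (1 - u) * θ ∈ Icc a b :=
  convex_Icc a b hc hθ hu.1 (sub_nonneg.2 hu.2) (add_sub_cancel u 1)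

lemma LipschitzOnWith.abs_sub_convex_comb_le {f : ℝ → ℝ} {K : NNReal} {a b c θ u : ℝ}
    (hf : LipschitzOnWith K f (Icc a b)) (hc : c ∈ Icc a b) (hθ : θ ∈ Icc a b)
    (hu : u ∈ Icc (0 : ℝ) 1) : |f (u * c + (1 - u) * θ) - f θ| ≤ K * (u * (b - a)) := by
  have hdist : |u * c + (1 - u) * θ - θ| ≤ u * (b - a) := by
    rw [show u * c + (1 - u) * θ - θ = u * (c - θ) by ring, abs_mul, abs_of_nonneg hu.1]
    exact mul_le_mul_of_nonneg_left (abs_sub_le_of_le_of_le hc.1 hc.2 hθ.1 hθ.2) hu.1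
  simpa only [Real.dist_eq] using
    (hf.dist_le_mul _ (convex_comb_mem_Icc hc hθ hu) _ hθ).trans
      (mul_le_mul_of_nonneg_left (by rwa [Real.dist_eq]) K.coe_nonneg)

lemma intervalIntegral.integral_eq_zero_of_antisymm {E : Type*} [NormedAddCommGroup E]
    [NormedSpace ℝ E] {g : ℝ → E} {a b : ℝ} (hg : ∀ x, g (a + b - x) = -g x) :
    ∫ x in a..b, g x = 0 := by
  have h := intervalIntegral.integral_comp_sub_left g (a + b) (a := a) (b := b)
  simp only [hg, intervalIntegral.integral_neg, add_sub_cancel_left, add_sub_cancel_right] at h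
  have htwice : (2 : ℝ) • ∫ x in a..b, g x = 0 := by
    rw [two_smul]; nth_rewrite 1 [← h]; exact neg_add_cancel _
  exact (smul_eq_zero.1 htwice).resolve_left two_ne_zero

lemma intervalIntegral.integral_comp_convex_comb {E : Type*} [NormedAddCommGroup E]
    [NormedSpace ℝ E] (g : ℝ → E) {u : ℝ} (hu : u ≠ 1) (a b c : ℝ) :
    ∫ θ in a..b, g (u * c + (1 - u) * θ) =
      (1 - u)⁻¹ • ∫ x in u * c + (1 - u) * a..u * c + (1 - u) * b, g x := by
  simp_rw [add_comm (u * c)]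
  exact intervalIntegral.integral_comp_mul_add g (sub_ne_zero.2 hu.symm) (u * c)

noncomputable def harmonicIntegrand (θL θR : ℝ) (f : ℝ → ℝ) (θ u : ℝ) : ℝ :=
  u⁻¹ * (f (u * θL + (1 - u) * θ) + f (u * θR + (1 - u) * θ) - 2 * f θ)

section Harmonic

variable {θL θR : ℝ} {f : ℝ → ℝ}

lemma continuousOn_harmonicIntegrand (hLR : θL ≤ θR) (hf : ContinuousOn f (Icc θL θR)) :
    ContinuousOn (Function.uncurry (harmonicIntegrand θL θR f)) (Icc θL θR ×ˢ Ioo 0 1) := by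
  have hcomb : ∀ c ∈ Icc θL θR, ContinuousOn (fun q : ℝ × ℝ => f (q.2 * c + (1 - q.2) * q.1))
      (Icc θL θR ×ˢ Ioo 0 1) := fun c hc =>
    hf.comp (by fun_prop) fun q hq => convex_comb_mem_Icc hc hq.1 (Ioo_subset_Icc_self hq.2)
  refine (continuousOn_snd.inv₀ fun q hq => hq.2.1.ne').mul
    (((hcomb θL (left_mem_Icc.2 hLR)).add (hcomb θR (right_mem_Icc.2 hLR))).sub
      (continuousOn_const.mul (hf.comp continuousOn_fst fun q hq => hq.1)))

lemma abs_harmonicIntegrand_le {K : NNReal} (hLR : θL ≤ θR)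
    (hf : LipschitzOnWith K f (Icc θL θR)) {θ u : ℝ} (hθ : θ ∈ Icc θL θR) (hu : u ∈ Ioo (0 : ℝ) 1) :
    |harmonicIntegrand θL θR f θ u| ≤ 2 * K * (θR - θL) := by
  have hu' := Ioo_subset_Icc_self hu
  have hL := hf.abs_sub_convex_comb_le (left_mem_Icc.2 hLR) hθ hu'
  have hR := hf.abs_sub_convex_comb_le (right_mem_Icc.2 hLR) hθ hu'
  calc |harmonicIntegrand θL θR f θ u|
      = u⁻¹ * |(f (u * θL + (1 - u) * θ) - f θ) + (f (u * θR + (1 - u) * θ) - f θ)| := by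
        rw [harmonicIntegrand, abs_mul, abs_inv, abs_of_pos hu.1]; ring_nf
    _ ≤ u⁻¹ * (2 * (K * (u * (θR - θL)))) := by
        refine mul_le_mul_of_nonneg_left ((abs_add_le _ _).trans ?_) (inv_nonneg.2 hu.1.le)
        linarith
    _ = 2 * K * (θR - θL) := by field_simp [hu.1.ne']

lemma integrableOn_harmonicIntegrand (hLR : θL ≤ θR) (hf : ContDiffOn ℝ 1 f (Icc θL θR)) :
    IntegrableOn (Function.uncurry (harmonicIntegrand θL θR f)) (Icc θL θR ×ˢ Ioo 0 1) := by
  obtain ⟨K, hK⟩ := hf.exists_lipschitzOnWith one_ne_zero (convex_Icc θL θR) isCompact_Icc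
  have hmeas : MeasurableSet (Icc θL θR ×ˢ Ioo (0 : ℝ) 1) :=
    measurableSet_Icc.prod measurableSet_Ioo
  refine IntegrableOn.of_bound ?_
    ((continuousOn_harmonicIntegrand hLR hK.continuousOn).aestronglyMeasurable hmeas)
    (2 * K * (θR - θL)) ?_
  · exact (measure_mono (prod_mono subset_rfl Ioo_subset_Icc_self)).trans_lt
      (isCompact_Icc.prod isCompact_Icc).measure_lt_top
  · rw [ae_restrict_iff' hmeas]
    exact Filter.Eventually.of_forall fun q hq => abs_harmonicIntegrand_le hLR hK hq.1 hq.2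


noncomputable def harmonicSectionIntegral (θL θR : ℝ) (f : ℝ → ℝ) (u : ℝ) : ℝ :=
  (u * (1 - u))⁻¹ * ((∫ x in θL..θR - u * (θR - θL), f x)
    - (∫ x in θL..θL + u * (θR - θL), f x) - (1 - 2 * u) * ∫ x in θL..θR, f x)

lemma harmonicSectionIntegral_one_sub (u : ℝ) :
    harmonicSectionIntegral θL θR f (1 - u) = -harmonicSectionIntegral θL θR f u := by
  have hL : θR - (1 - u) * (θR - θL) = θL + u * (θR - θL) := by ring
  have hR : θL + (1 - u) * (θR - θL) = θR - u * (θR - θL) := by ring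
  simp only [harmonicSectionIntegral, hL, hR, sub_sub_cancel]
  ring

lemma setIntegral_harmonicIntegrand (hLR : θL ≤ θR)
    (hf : ContinuousOn f (Icc θL θR)) {u : ℝ} (hu : u ∈ Ioo (0 : ℝ) 1) :
    ∫ θ in Icc θL θR, harmonicIntegrand θL θR f θ u = harmonicSectionIntegral θL θR f u := by
  have hu' := Ioo_subset_Icc_self hu
  have hint : ∀ x ∈ Icc θL θR, ∀ y ∈ Icc θL θR, IntervalIntegrable f volume x y :=
    fun x hx y hy => (hf.mono (uIcc_subset_Icc hx hy)).intervalIntegrable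
  have hint_comb : ∀ c ∈ Icc θL θR,
      IntervalIntegrable (fun θ => f (u * c + (1 - u) * θ)) volume θL θR := fun c hc =>
    ContinuousOn.intervalIntegrable <| hf.comp (by fun_prop) fun θ hθ =>
      convex_comb_mem_Icc hc (by rwa [uIcc_of_le hLR] at hθ) hu'
  have hL := left_mem_Icc.2 hLR
  have hR := right_mem_Icc.2 hLR
  have hmid : θL + u * (θR - θL) ∈ Icc θL θR :=
    ⟨by nlinarith [hu.1], by nlinarith [hu.2]⟩
  rw [integral_Icc_eq_integral_Ioc, ← intervalIntegral.integral_of_le hLR]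
  simp only [harmonicIntegrand]
  rw [intervalIntegral.integral_const_mul,
    intervalIntegral.integral_sub ((hint_comb θL hL).add (hint_comb θR hR))
      ((hint θL hL θR hR).const_mul 2),
    intervalIntegral.integral_add (hint_comb θL hL) (hint_comb θR hR),
    intervalIntegral.integral_const_mul,
    intervalIntegral.integral_comp_convex_comb f hu.2.ne,
    intervalIntegral.integral_comp_convex_comb f hu.2.ne,
    show u * θL + (1 - u) * θL = θL by ring,
    show u * θL + (1 - u) * θR = θR - u * (θR - θL) by ring,
    show u * θR + (1 - u) * θL = θL + u * (θR - θL) by ring,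
    show u * θR + (1 - u) * θR = θR by ring,
    ← intervalIntegral.integral_interval_sub_left (hint θL hL θR hR) (hint θL hL _ hmid)]
  have h1u : 1 - u ≠ 0 := sub_ne_zero.2 hu.2.ne'
  simp only [harmonicSectionIntegral, smul_eq_mul]
  field_simp
  ring

end Harmonic

theorem uniform_stationary_single_site (θL θR : ℝ) (hLR : θL < θR)
    (f : ℝ → ℝ) (hf : ContDiffOn ℝ 1 f (Set.Icc θL θR)) :
    IntegrableOn (fun q : ℝ × ℝ =>
      q.2⁻¹ * (f (q.2 * θL + (1 - q.2) * q.1) + f (q.2 * θR + (1 - q.2) * q.1) - 2 * f q.1))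
      (Set.Icc θL θR ×ˢ Set.Ioo 0 1) volume ∧
    (∫ θ in Set.Icc θL θR, ∫ u in Set.Ioo (0:ℝ) 1,
      u⁻¹ * (f (u * θL + (1 - u) * θ) + f (u * θR + (1 - u) * θ) - 2 * f θ)) = 0 := by
  have hint := integrableOn_harmonicIntegrand hLR.le hf
  refine ⟨hint, ?_⟩
  rw [IntegrableOn, Measure.volume_eq_prod, ← Measure.prod_restrict] at hint
  change ∫ θ in Icc θL θR, ∫ u in Ioo (0 : ℝ) 1, harmonicIntegrand θL θR f θ u = 0
  rw [integral_integral_swap hint, setIntegral_congr_fun measurableSet_Ioo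
      fun u hu => setIntegral_harmonicIntegrand hLR.le hf.continuousOn hu,
    ← integral_Ioc_eq_integral_Ioo, ← intervalIntegral.integral_of_le zero_le_one]
  exact intervalIntegral.integral_eq_zero_of_antisymm fun u => by
    rw [zero_add, harmonicSectionIntegral_one_sub]
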